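/- arXiv:2007.09950 — 4 statements merged into one kernel-verified Lean document; each statement's English description precedes it below -/
import Mathlib

section
/- Let R be a commutative ring, n ≥ 2, and f, g₁, g₂, …, gₙ ∈ R. Assume that the sequence f, g₂, g₃, …, gₙ is a regular sequence on R. If a₂, …, aₙ ∈ R satisfy a₂·g₂ + a₃·g₃ + ⋯ + aₙ·gₙ ∈ (f), then the vector (0, a₂, …, aₙ) ∈ Rⁿ belongs to the submodule T of Rⁿ generated by the vectors f·eᵢ (1 ≤ i ≤ n) and gⱼ·eᵢ − gᵢ·eⱼ (1 ≤ i < j ≤ n), where e₁, …, eₙ is the standard basis of Rⁿ. -/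
/-!
Induct on the number `m` of entries of `g`. If `f, g₁, …, gₘ` is regular and
`∑ aᵢ gᵢ ∈ (f)`, then `aₘ gₘ ∈ (f, g₁, …, gₘ₋₁)`, so by regularity
`aₘ = c f + ∑_{i<m} dᵢ gᵢ`. Subtracting `c f eₘ` and the Koszul relations
`dᵢ (gᵢ eₘ - gₘ eᵢ)` from `a` kills its last entry without leaving the set of vectors
with `∑ aᵢ gᵢ ∈ (f)`, and the induction hypothesis applies to what is left. The theorem is
the case of the sequence `g₂, …, gₙ`, with the vectors supported on the indices `2, …, n`.
-/

open RingTheory.Sequence Function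

theorem Function.extend_single_zero {ι κ R : Type*} [DecidableEq ι] [DecidableEq κ] [Zero R]
    {e : ι → κ} (he : Injective e) (i : ι) (x : R) :
    extend e (Pi.single i x) 0 = Pi.single (e i) x := by
  ext k
  by_cases hk : ∃ j, e j = k
  · obtain ⟨j, rfl⟩ := hk
    simp [he.extend_apply, Pi.single_apply, he.eq_iff]
  · rw [extend_apply' _ _ _ hk, Pi.single_eq_of_ne (fun h => hk ⟨i, h.symm⟩)]
    rfl

section

variable {R : Type*} [CommRing R]

def trivialSubmodule {ι : Type*} [LT ι] [DecidableEq ι] (f : R) (g : ι → R) :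
    Submodule R (ι → R) :=
  Submodule.span R ({v | ∃ i, v = Pi.single i f} ∪
    {v | ∃ i j, i < j ∧ v = Pi.single i (g j) - Pi.single j (g i)})

theorem trivialSubmodule_map_extendByZero_le {ι κ : Type*} [LinearOrder ι] [Preorder κ]
    [DecidableEq κ] {e : ι → κ} (he : StrictMono e) (f : R) (g : κ → R) :
    (trivialSubmodule f (g ∘ e)).map (ExtendByZero.linearMap R e) ≤ trivialSubmodule f g := by
  rw [trivialSubmodule, Submodule.map_span_le]
  rintro _ (⟨i, rfl⟩ | ⟨i, j, hij, rfl⟩) <;> apply Submodule.subset_span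
  · exact Or.inl ⟨e i, extend_single_zero he.injective i f⟩
  · refine Or.inr ⟨e i, e j, he hij, ?_⟩
    rw [map_sub]
    exact congr_arg₂ _ (extend_single_zero he.injective i _) (extend_single_zero he.injective j _)

theorem Ideal.ofList_cons_ofFn {m : ℕ} (f : R) (g : Fin m → R) :
    Ideal.ofList (f :: List.ofFn g) = Ideal.span (insert f (Set.range g)) := by
  change Ideal.span {r | r ∈ _} = _
  congr 1
  ext x
  simp [List.mem_ofFn']

theorem isWeaklyRegular_cons_ofFn_succ_iff {m : ℕ} {f : R} {g : Fin (m + 1) → R} :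
    IsWeaklyRegular R (f :: List.ofFn g) ↔
      IsWeaklyRegular R (f :: List.ofFn (g ∘ Fin.castSucc)) ∧
        ∀ x, g (Fin.last m) * x ∈ Ideal.span (insert f (Set.range (g ∘ Fin.castSucc))) →
          x ∈ Ideal.span (insert f (Set.range (g ∘ Fin.castSucc))) := by
  rw [List.ofFn_succ', List.concat_eq_append, ← List.cons_append, isWeaklyRegular_append_iff,
    isWeaklyRegular_singleton_iff, Ideal.ofList_cons_ofFn, smul_eq_mul, Ideal.mul_top,
    isSMulRegular_quotient_iff_mem_of_smul_mem]
  rfl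

theorem mem_trivialSubmodule_of_last_eq {m : ℕ} {f : R} {g : Fin (m + 1) → R}
    {a : Fin (m + 1) → R} {c : R} {d : Fin m → R}
    (hcd : a (Fin.last m) = c * f + ∑ i, d i * g i.castSucc)
    (hb : (fun i => a i.castSucc + d i * g (Fin.last m)) ∈
      trivialSubmodule f (g ∘ Fin.castSucc)) :
    a ∈ trivialSubmodule f g := by
  set b : Fin m → R := fun i => a i.castSucc + d i * g (Fin.last m)
  have hdecomp : a = extend Fin.castSucc b 0 + c • Pi.single (Fin.last m) f -
      ∑ i, d i • (Pi.single i.castSucc (g (Fin.last m)) -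
        Pi.single (Fin.last m) (g i.castSucc)) := by
    ext k
    induction k using Fin.lastCases with
    | last => simp [hcd]
    | cast i => simp [(Fin.castSucc_injective m).extend_apply, b, Pi.single_apply]
  rw [hdecomp]
  refine sub_mem (add_mem ?_ ?_) (sum_mem fun i _ => Submodule.smul_mem _ _
    (Submodule.subset_span (Or.inr ⟨_, _, Fin.castSucc_lt_last i, rfl⟩)))
  · exact trivialSubmodule_map_extendByZero_le Fin.strictMono_castSucc f g ⟨b, hb, rfl⟩
  · exact Submodule.smul_mem _ _ (Submodule.subset_span (Or.inl ⟨_, rfl⟩))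

theorem mem_trivialSubmodule_of_sum_mul_mem {m : ℕ} {f : R} {g : Fin m → R}
    (hreg : IsWeaklyRegular R (f :: List.ofFn g)) {a : Fin m → R}
    (hsum : ∑ i, a i * g i ∈ Ideal.span {f}) : a ∈ trivialSubmodule f g := by
  induction m with
  | zero => exact Subsingleton.elim a 0 ▸ zero_mem _
  | succ m ih =>
  obtain ⟨hreg', hlast⟩ := isWeaklyRegular_cons_ofFn_succ_iff.mp hreg
  set I := Ideal.span (insert f (Set.range (g ∘ Fin.castSucc)))
  rw [Fin.sum_univ_castSucc] at hsum
  have hfI : Ideal.span {f} ≤ I :=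
    Ideal.span_mono (Set.singleton_subset_iff.mpr (Set.mem_insert _ _))
  have hgI (i : Fin m) : g i.castSucc ∈ I :=
    Ideal.subset_span (Set.mem_insert_of_mem _ ⟨i, rfl⟩)
  have haI : a (Fin.last m) ∈ I := hlast _ <| by
    rw [mul_comm]
    exact (Submodule.add_mem_iff_right _
      (sum_mem fun i _ => Ideal.mul_mem_left _ _ (hgI i))).mp (hfI hsum)
  obtain ⟨c, d, hcd⟩ :
      ∃ (c : R) (d : Fin m → R), a (Fin.last m) = c * f + ∑ i, d i * g i.castSucc := by
    obtain ⟨c, z, hz, h⟩ := Ideal.mem_span_insert.mp haI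
    obtain ⟨d, rfl⟩ := Ideal.mem_span_range_iff_exists_fun.mp hz
    exact ⟨c, d, h⟩
  refine mem_trivialSubmodule_of_last_eq hcd (ih hreg' ?_)
  have hsum' : ∑ i, (a i.castSucc + d i * g (Fin.last m)) * (g ∘ Fin.castSucc) i =
      (∑ i : Fin m, a i.castSucc * g i.castSucc + a (Fin.last m) * g (Fin.last m)) -
        g (Fin.last m) * c * f := by
    simp only [hcd, comp_apply, add_mul, Finset.sum_add_distrib, Finset.sum_mul]
    rw [Finset.sum_congr rfl fun i _ => mul_right_comm (d i) _ _]
    ring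
  rw [hsum']
  exact sub_mem hsum (Ideal.mul_mem_left _ _ (Ideal.mem_span_singleton_self f))

end

/-- Let `R` be a commutative ring, `n ≥ 2`, and `f, g₁, …, gₙ ∈ R`
(with `g : Fin n → R`, `g ⟨0, _⟩` playing the role of `g₁`).  Assume `f, g₂, …, gₙ` is a
regular sequence on `R`.  If `a = (0, a₂, …, aₙ)` satisfies
`a₂·g₂ + ⋯ + aₙ·gₙ ∈ (f)`, then `a` belongs to the submodule `T` of `Rⁿ` generated by
`f·eᵢ` (for all `i`) and `gⱼ·eᵢ − gᵢ·eⱼ` (for `i < j`). -/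
theorem stmt_1 (R : Type*) [CommRing R] (n : ℕ) (hn : 2 ≤ n) (f : R) (g : Fin n → R)
    (hreg : RingTheory.Sequence.IsRegular R (f :: ((List.finRange n).drop 1).map g))
    (a : Fin n → R) (h0 : a ⟨0, by omega⟩ = 0)
    (hlog : ∑ i ∈ Finset.univ.erase ⟨0, by omega⟩, a i * g i ∈ Ideal.span {f}) :
    a ∈ Submodule.span R
        ({v : Fin n → R | ∃ i : Fin n, v = Pi.single i f} ∪
          {v : Fin n → R | ∃ i j : Fin n, i < j ∧
            v = Pi.single i (g j) - Pi.single j (g i)}) := by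
  obtain ⟨m, rfl⟩ : ∃ m, n = m + 1 := ⟨n - 1, by omega⟩
  change a 0 = 0 at h0
  have hseq : ((List.finRange (m + 1)).drop 1).map g = List.ofFn (g ∘ Fin.succ) := by
    simp [List.finRange_succ, List.ofFn_eq_map]
  rw [hseq] at hreg
  rw [Finset.sum_erase _ (by simp [h0]), Fin.sum_univ_succ, h0, zero_mul, zero_add] at hlog
  have ha : a = extend Fin.succ (Fin.tail a) 0 := by
    ext k
    induction k using Fin.cases with
    | zero => simp [h0]
    | succ i => exact ((Fin.succ_injective m).extend_apply (Fin.tail a) 0 i).symm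
  rw [ha]
  exact trivialSubmodule_map_extendByZero_le Fin.strictMono_succ f g
    ⟨_, mem_trivialSubmodule_of_sum_mul_mem hreg.toIsWeaklyRegular hlog, rfl⟩
end

section
/- Let R = ℂ[x, y] be the polynomial ring in two variables over ℂ, f = x² − y³, g₁ = ∂f/∂x = 2x, g₂ = ∂f/∂y = −3y². Let N = {(a₁, a₂) ∈ R² : a₁·g₁ + a₂·g₂ ∈ (f)} and let T ⊆ R² be the submodule generated by (f, 0), (0, f) and (g₂, −g₁) = (−3y², −2x). Then the quotient module N/T is a ℂ-vector space of dimension 2, and the classes of the vectors (3x, 2y) and (3xy, 2y²) form a ℂ-basis of N/T. -/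
open MvPolynomial

/-- The polynomial ring `R = ℂ[x, y]`, with `x = X 0`, `y = X 1`. -/
noncomputable abbrev cuspRing : Type := MvPolynomial (Fin 2) ℂ

/-- `f = x² − y³`. -/
noncomputable def cuspF : cuspRing := X 0 ^ 2 - X 1 ^ 3

/-- `g₁ = ∂f/∂x = 2x`, `g₂ = ∂f/∂y = −3y²`. -/
noncomputable def cuspG : Fin 2 → cuspRing := ![2 * X 0, -3 * X 1 ^ 2]

/-- The module `N = {(a₁, a₂) ∈ R² : a₁·g₁ + a₂·g₂ ∈ (f)}` of logarithmic vectors. -/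
noncomputable def cuspN : Submodule cuspRing (Fin 2 → cuspRing) :=
  Submodule.comap
    (∑ i : Fin 2, cuspG i • (LinearMap.proj i : (Fin 2 → cuspRing) →ₗ[cuspRing] cuspRing))
    (Ideal.span {cuspF})

/-- The trivial submodule `T`, generated by `(f, 0)`, `(0, f)` and `(g₂, −g₁) = (−3y², −2x)`. -/
noncomputable def cuspT : Submodule cuspRing (Fin 2 → cuspRing) :=
  Submodule.span cuspRing {![cuspF, 0], ![0, cuspF], ![cuspG 1, -cuspG 0]}

/-!
The Euler field `E = (3x, 2y)` and the Hamiltonian field `H = (g₂, −g₁)` generate `N`: if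
`a₁ g₁ + a₂ g₂ = c f`, then `x ∣ y² (3a₂ − y c)`, and since `x` is prime, `3a₂ = y c + x d`,
which forces `(6a₁, 6a₂) = c E − d H`. Modulo `T` we have `H ≡ 0`, `x E ≡ 0` and `y² E ≡ 0`,
so `p E + q H` is congruent to `p(0) E + (∂p/∂y)(0) · y E`. The classes of `E` and `y E` are
independent because first coordinates of elements of `T` lie in the monomial ideal `(x², y²)`,
which contains neither `x` nor `x y`.
-/

namespace MvPolynomial

variable {σ R : Type*}

theorem coeff_eq_zero_of_mem_span_X_sq_X_sq [CommSemiring R] {i j : σ} {p : MvPolynomial σ R}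
    (hp : p ∈ Ideal.span {X i ^ 2, X j ^ 2}) {m : σ →₀ ℕ} (hi : m i < 2) (hj : m j < 2) :
    coeff m p = 0 := by
  rw [X_pow_eq_monomial, X_pow_eq_monomial, ← Set.image_pair (fun s => monomial s (1 : R)),
    mem_ideal_span_monomial_image] at hp
  by_contra hm
  obtain ⟨s, hs, hsm⟩ := hp m (mem_support_iff.mpr hm)
  rcases hs with rfl | rfl <;> simp only [Finsupp.single_le_iff] at hsm <;> omega

theorem sub_C_sub_C_mul_X_mem_span_X_X_sq [CommRing R] (p : MvPolynomial (Fin 2) R) :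
    p - C (coeff 0 p) - C (coeff (Finsupp.single 1 1) p) * X 1 ∈ Ideal.span {X 0, X 1 ^ 2} := by
  rw [X_pow_eq_monomial, X, ← Set.image_pair (fun s => monomial s (1 : R)),
    mem_ideal_span_monomial_image]
  intro m hm
  contrapose! hm
  simp only [Set.mem_insert_iff, Set.mem_singleton_iff, forall_eq_or_imp, forall_eq,
    Finsupp.single_le_iff, not_le] at hm
  have hm' : m = 0 ∨ m = Finsupp.single 1 1 := by
    have h0 : m 0 = 0 := by omega
    refine (show m 1 = 0 ∨ m 1 = 1 by omega).imp (fun h1 => ?_) (fun h1 => ?_) <;>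
      ext i <;> fin_cases i <;> simpa
  rw [notMem_support_iff]
  rcases hm' with rfl | rfl <;>
    simp [coeff_X, coeff_C, (Finsupp.single_ne_zero.mpr one_ne_zero).symm]

end MvPolynomial

noncomputable def cuspEuler : Fin 2 → cuspRing := ![3 * X 0, 2 * X 1]

noncomputable def cuspHamiltonian : Fin 2 → cuspRing := ![cuspG 1, -cuspG 0]

theorem mem_cuspN_iff (v : Fin 2 → cuspRing) :
    v ∈ cuspN ↔ cuspF ∣ 2 * X 0 * v 0 - 3 * X 1 ^ 2 * v 1 := by
  simp [cuspN, Ideal.mem_span_singleton, cuspG, sub_eq_add_neg]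

theorem cuspEuler_mem_cuspN : cuspEuler ∈ cuspN :=
  (mem_cuspN_iff _).mpr ⟨6, by
    simp only [cuspEuler, cuspF, Matrix.cons_val_zero, Matrix.cons_val_one, Matrix.cons_val_fin_one]
    ring⟩

theorem cuspHamiltonian_mem_cuspN : cuspHamiltonian ∈ cuspN :=
  (mem_cuspN_iff _).mpr ⟨0, by
    simp only [cuspHamiltonian, cuspG, Matrix.cons_val_zero, Matrix.cons_val_one,
      Matrix.cons_val_fin_one]
    ring⟩

theorem cuspN_eq_span : cuspN = Submodule.span cuspRing {cuspEuler, cuspHamiltonian} := by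
  refine le_antisymm (fun v hv => ?_) <| Submodule.span_le.mpr <| by
    simp [Set.insert_subset_iff, cuspEuler_mem_cuspN, cuspHamiltonian_mem_cuspN]
  obtain ⟨c, hc⟩ := (mem_cuspN_iff v).mp hv
  have hx : X 0 ∣ X 1 ^ 2 * (3 * v 1 - X 1 * c) :=
    ⟨2 * v 0 - X 0 * c, by simp only [cuspF] at hc; linear_combination -hc⟩
  have hx1 : ¬ (X 0 : cuspRing) ∣ X 1 ^ 2 := fun h => by
    simpa using X_prime.dvd_of_dvd_pow h
  obtain ⟨d, hd⟩ := (X_prime.dvd_or_dvd hx).resolve_left hx1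
  have ha : 2 * v 0 = X 0 * c + X 1 ^ 2 * d := by
    refine mul_left_cancel₀ (X_ne_zero (0 : Fin 2)) ?_
    simp only [cuspF] at hc
    linear_combination hc + X 1 ^ 2 * hd
  have h6 : C 6⁻¹ * (6 : cuspRing) = 1 := by
    rw [← map_ofNat C 6, ← map_mul, inv_mul_cancel₀ (by norm_num), map_one]
  rw [Submodule.mem_span_pair]
  refine ⟨C 6⁻¹ * c, -C 6⁻¹ * d, funext fun i => ?_⟩
  fin_cases i
  · simp [cuspEuler, cuspHamiltonian, cuspG]
    linear_combination -3 * C 6⁻¹ * ha + v 0 * h6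
  · simp [cuspEuler, cuspHamiltonian, cuspG]
    linear_combination -2 * C 6⁻¹ * hd + v 1 * h6

theorem X_one_smul_cuspEuler : (X 1 : cuspRing) • cuspEuler = ![3 * X 0 * X 1, 2 * X 1 ^ 2] := by
  funext i
  fin_cases i <;>
    simp only [cuspEuler, Pi.smul_apply, smul_eq_mul, Fin.zero_eta, Fin.mk_one,
      Matrix.cons_val_zero, Matrix.cons_val_one, Matrix.cons_val_fin_one] <;> ring

theorem cuspHamiltonian_mem_cuspT : cuspHamiltonian ∈ cuspT :=
  Submodule.subset_span (by simp [cuspHamiltonian])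

theorem smul_cuspEuler_mem_cuspT {p : cuspRing} (hp : p ∈ Ideal.span {X 0, X 1 ^ 2}) :
    p • cuspEuler ∈ cuspT := by
  have hx : (X 0 : cuspRing) • cuspEuler =
      (3 : cuspRing) • ![cuspF, 0] - (X 1 : cuspRing) • cuspHamiltonian := by
    funext i; fin_cases i <;> simp [cuspEuler, cuspHamiltonian, cuspF, cuspG] <;> ring
  have hy : (X 1 ^ 2 : cuspRing) • cuspEuler =
      (-2 : cuspRing) • ![0, cuspF] - (X 0 : cuspRing) • cuspHamiltonian := by
    funext i; fin_cases i <;> simp [cuspEuler, cuspHamiltonian, cuspF, cuspG] <;> ring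
  have hf₀ : ![cuspF, 0] ∈ cuspT := Submodule.subset_span (by simp)
  have hf₁ : ![0, cuspF] ∈ cuspT := Submodule.subset_span (by simp)
  have hH := cuspHamiltonian_mem_cuspT
  obtain ⟨u, w, rfl⟩ := Ideal.mem_span_pair.mp hp
  rw [add_smul, mul_smul, mul_smul, hx, hy]
  apply_rules [Submodule.add_mem, Submodule.sub_mem, Submodule.smul_mem]

theorem cuspT_le_comap_proj_zero :
    cuspT ≤ Submodule.comap (LinearMap.proj 0) (Ideal.span {X 0 ^ 2, X 1 ^ 2}) := by
  rw [cuspT, Submodule.span_le]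
  rintro v (rfl | rfl | rfl) <;> rw [SetLike.mem_coe, Submodule.mem_comap, Ideal.mem_span_pair]
  · exact ⟨1, -X 1, by simp only [cuspF, LinearMap.proj_apply, Matrix.cons_val_zero]; ring⟩
  · exact ⟨0, 0, by simp⟩
  · exact ⟨0, -3, by simp [cuspG]⟩

theorem eq_zero_of_smul_cuspEuler_add_smul_mem_cuspT {a b : ℂ}
    (h : a • cuspEuler + b • (X 1 : cuspRing) • cuspEuler ∈ cuspT) : a = 0 ∧ b = 0 := by
  have h0 : C (3 * a) * X 0 + C (3 * b) * (X 0 * X 1) ∈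
      Ideal.span {(X 0 : cuspRing) ^ 2, X 1 ^ 2} := by
    convert Submodule.mem_comap.mp (cuspT_le_comap_proj_zero h) using 1
    simp [cuspEuler, smul_eq_C_mul, map_ofNat C]
    ring
  have hx := coeff_eq_zero_of_mem_span_X_sq_X_sq h0 (m := Finsupp.single 0 1) (by simp) (by simp)
  have hxy := coeff_eq_zero_of_mem_span_X_sq_X_sq h0
    (m := Finsupp.single 0 1 + Finsupp.single 1 1) (by simp) (by simp)
  rw [coeff_add, coeff_C_mul, coeff_C_mul] at hx hxy
  exact ⟨by simpa [coeff_X, coeff_mul_X'] using hx, by simpa [coeff_X, coeff_mul_X'] using hxy⟩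

noncomputable def cuspEulerClasses : Fin 2 → cuspN ⧸ Submodule.comap cuspN.subtype cuspT :=
  ![Submodule.Quotient.mk ⟨cuspEuler, cuspEuler_mem_cuspN⟩,
    Submodule.Quotient.mk ((X 1 : cuspRing) • ⟨cuspEuler, cuspEuler_mem_cuspN⟩)]

theorem linearIndependent_cuspEulerClasses : LinearIndependent ℂ cuspEulerClasses := by
  refine LinearIndependent.pair_iff.mpr fun a b hab => ?_
  rw [← Submodule.Quotient.mk_smul, ← Submodule.Quotient.mk_smul, ← Submodule.Quotient.mk_add,
    Submodule.Quotient.mk_eq_zero, Submodule.mem_comap] at hab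
  exact eq_zero_of_smul_cuspEuler_add_smul_mem_cuspT hab

theorem top_le_span_cuspEulerClasses : ⊤ ≤ Submodule.span ℂ (Set.range cuspEulerClasses) := by
  intro x _
  obtain ⟨w, rfl⟩ := Submodule.Quotient.mk_surjective _ x
  have hspan : (w : Fin 2 → cuspRing) ∈ Submodule.span cuspRing {cuspEuler, cuspHamiltonian} :=
    cuspN_eq_span ▸ w.2
  obtain ⟨p, q, hw⟩ := Submodule.mem_span_pair.mp hspan
  set c₀ := coeff 0 p
  set c₁ := coeff (Finsupp.single 1 1) p
  have hmk : Submodule.Quotient.mk w = c₀ • cuspEulerClasses 0 + c₁ • cuspEulerClasses 1 := by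
    rw [cuspEulerClasses, Matrix.cons_val_zero, Matrix.cons_val_one, Matrix.cons_val_zero,
      ← Submodule.Quotient.mk_smul, ← Submodule.Quotient.mk_smul, ← Submodule.Quotient.mk_add,
      Submodule.Quotient.eq, Submodule.mem_comap, Submodule.subtype_apply]
    have hdiff : (w : Fin 2 → cuspRing) - (c₀ • cuspEuler + c₁ • (X 1 : cuspRing) • cuspEuler) =
        (p - C c₀ - C c₁ * X 1) • cuspEuler + q • cuspHamiltonian := by
      simp only [← hw, ← algebraMap_smul cuspRing c₀, ← algebraMap_smul cuspRing c₁, algebraMap_eq]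
      module
    change _ - (c₀ • cuspEuler + c₁ • (X 1 : cuspRing) • cuspEuler) ∈ cuspT
    rw [hdiff]
    exact Submodule.add_mem _ (smul_cuspEuler_mem_cuspT (sub_C_sub_C_mul_X_mem_span_X_X_sq p))
      (Submodule.smul_mem _ _ cuspHamiltonian_mem_cuspT)
  rw [hmk]
  exact Submodule.add_mem _ (Submodule.smul_mem _ _ (Submodule.subset_span ⟨0, rfl⟩))
    (Submodule.smul_mem _ _ (Submodule.subset_span ⟨1, rfl⟩))

/-- For the cusp `f = x² − y³`, the quotient `N/T` is a `ℂ`-vector space of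
dimension `2`, and the classes of `(3x, 2y)` and `(3xy, 2y²)` form a `ℂ`-basis of `N/T`. -/
theorem stmt_4 :
    ∃ (h1 : (![3 * X 0, 2 * X 1] : Fin 2 → cuspRing) ∈ cuspN)
      (h2 : (![3 * X 0 * X 1, 2 * X 1 ^ 2] : Fin 2 → cuspRing) ∈ cuspN)
      (b : Module.Basis (Fin 2) ℂ (cuspN ⧸ Submodule.comap cuspN.subtype cuspT)),
        b 0 = Submodule.Quotient.mk ⟨![3 * X 0, 2 * X 1], h1⟩ ∧
        b 1 = Submodule.Quotient.mk ⟨![3 * X 0 * X 1, 2 * X 1 ^ 2], h2⟩ ∧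
        Module.finrank ℂ (cuspN ⧸ Submodule.comap cuspN.subtype cuspT) = 2 := by
  let b := Module.Basis.mk linearIndependent_cuspEulerClasses top_le_span_cuspEulerClasses
  refine ⟨cuspEuler_mem_cuspN, X_one_smul_cuspEuler ▸ cuspN.smul_mem _ cuspEuler_mem_cuspN, b,
    Module.Basis.mk_apply .., ?_, by simp [Module.finrank_eq_card_basis b]⟩
  rw [Module.Basis.mk_apply]
  exact congrArg _ (Subtype.ext X_one_smul_cuspEuler)
end

section
/- In the polynomial ring ℂ[x, y, z], let f = x³ + y³ + z⁴. Then the ideal quotient ((f, ∂f/∂x, ∂f/∂y) : (∂f/∂z)), i.e., ((x³ + y³ + z⁴, 3x², 3y²) : (4z³)), equals the ideal (x², y², z). -/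
/-!
Since `∂f/∂x = 3x²` and `∂f/∂y = 3y²` with `3` a unit, and `f ≡ z⁴` modulo `(x², y²)`, the ideal
`(f, ∂f/∂x, ∂f/∂y)` is the monomial ideal `(x², y², z⁴)`, and `∂f/∂z` generates the same ideal as
`z³`. For a monomial ideal, colon by a monomial `x^n` is obtained by subtracting `n`
(truncated) from every generating exponent, since `s ≤ m + n ↔ s - n ≤ m` in `ℕ^σ`;
here this turns `(x², y², z⁴)` into `(x², y², z)`.
-/

open MvPolynomial

/-- `f = x³ + y³ + z⁴ ∈ ℂ[x, y, z]`, with `x = X 0`, `y = X 1`, `z = X 2`. -/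
noncomputable def fU12 : MvPolynomial (Fin 3) ℂ := X 0 ^ 3 + X 1 ^ 3 + X 2 ^ 4

namespace MvPolynomial

variable {σ R : Type*} [CommSemiring R]

theorem support_mul_monomial_one (p : MvPolynomial σ R) (n : σ →₀ ℕ) :
    (p * monomial n 1).support = p.support.map (addRightEmbedding n) :=
  AddMonoidAlgebra.support_coeff_mul_single p _ (by simp) _

theorem colon_span_monomial_image (S : Set (σ →₀ ℕ)) (n : σ →₀ ℕ) :
    (Ideal.span ((fun s => monomial s (1 : R)) '' S)).colon (Ideal.span {monomial n (1 : R)}) =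
      Ideal.span ((fun s => monomial s (1 : R)) '' ((· - n) '' S)) := by
  ext a
  simp only [Ideal.mem_colon_span_singleton, mem_ideal_span_monomial_image,
    support_mul_monomial_one, Finset.forall_mem_map, Set.exists_mem_image, tsub_le_iff_right]
  rfl

theorem isUnit_ofNat {K : Type*} [Field K] [CharZero K] (n : ℕ) [n.AtLeastTwo] :
    IsUnit (OfNat.ofNat n : MvPolynomial σ K) :=
  map_ofNat (C : K →+* MvPolynomial σ K) n ▸ (IsUnit.mk0 (OfNat.ofNat n : K) (by norm_num)).map C

end MvPolynomial

theorem Ideal.span_triple_eq_of_isUnit {R : Type*} [CommRing R] (a b x y z u v : R)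
    (hu : IsUnit u) (hv : IsUnit v) :
    Ideal.span {a * x + b * y + z, u * x, v * y} = Ideal.span {x, y, z} := by
  apply le_antisymm <;> rw [Ideal.span_le]
  · set J := Ideal.span {x, y, z}
    have hx : x ∈ J := Ideal.subset_span (by simp)
    have hy : y ∈ J := Ideal.subset_span (by simp)
    have hz : z ∈ J := Ideal.subset_span (by simp)
    rintro _ (rfl | rfl | rfl)
    · exact add_mem (add_mem (J.mul_mem_left a hx) (J.mul_mem_left b hy)) hz
    · exact J.mul_mem_left u hx
    · exact J.mul_mem_left v hy
  · set I := Ideal.span {a * x + b * y + z, u * x, v * y}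
    have hx : x ∈ I := (I.unit_mul_mem_iff_mem hu).1 (Ideal.subset_span (by simp))
    have hy : y ∈ I := (I.unit_mul_mem_iff_mem hv).1 (Ideal.subset_span (by simp))
    have hf : a * x + b * y + z ∈ I := Ideal.subset_span (by simp)
    have hz : z ∈ I := by
      convert sub_mem (sub_mem hf (I.mul_mem_left a hx)) (I.mul_mem_left b hy) using 1
      ring
    rintro _ (rfl | rfl | rfl) <;> assumption

theorem span_fU12_pderiv_eq :
    Ideal.span {fU12, pderiv 0 fU12, pderiv 1 fU12} =
      Ideal.span {(X 0 ^ 2 : MvPolynomial (Fin 3) ℂ), X 1 ^ 2, X 2 ^ 4} := by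
  have hf : fU12 = X 0 * X 0 ^ 2 + X 1 * X 1 ^ 2 + X 2 ^ 4 := by unfold fU12; ring
  have h0 : pderiv 0 fU12 = 3 * X 0 ^ 2 := by simp [fU12]
  have h1 : pderiv 1 fU12 = 3 * X 1 ^ 2 := by simp [fU12]
  rw [h0, h1, hf]
  exact Ideal.span_triple_eq_of_isUnit _ _ _ _ _ _ _ (isUnit_ofNat 3) (isUnit_ofNat 3)

/-- For `f = x³ + y³ + z⁴` in `ℂ[x, y, z]`, the ideal quotient
`((f, ∂f/∂x, ∂f/∂y) : (∂f/∂z))` equals the ideal `(x², y², z)`. -/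
theorem stmt_8 :
    (Ideal.span {fU12, pderiv 0 fU12, pderiv 1 fU12}).colon (Ideal.span {pderiv 2 fU12}) =
      Ideal.span {(X 0 ^ 2 : MvPolynomial (Fin 3) ℂ), X 1 ^ 2, X 2} := by
  have hz : pderiv 2 fU12 = 4 * monomial (Finsupp.single 2 3) 1 := by
    rw [← X_pow_eq_monomial]
    simp [fU12]
  have hM : ({X 0 ^ 2, X 1 ^ 2, X 2 ^ 4} : Set (MvPolynomial (Fin 3) ℂ)) =
      (fun s => monomial s 1) '' {Finsupp.single 0 2, Finsupp.single 1 2, Finsupp.single 2 4} := by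
    simp only [Set.image_insert_eq, Set.image_singleton, X_pow_eq_monomial]
  have hN : ({X 0 ^ 2, X 1 ^ 2, X 2} : Set (MvPolynomial (Fin 3) ℂ)) =
      (fun s => monomial s 1) '' {Finsupp.single 0 2, Finsupp.single 1 2, Finsupp.single 2 1} := by
    simp only [Set.image_insert_eq, Set.image_singleton, X_pow_eq_monomial]
    rfl
  have hshift : (· - Finsupp.single 2 3) ''
      ({Finsupp.single 0 2, Finsupp.single 1 2, Finsupp.single 2 4} : Set (Fin 3 →₀ ℕ)) =
      {Finsupp.single 0 2, Finsupp.single 1 2, Finsupp.single 2 1} := by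
    simp only [Set.image_insert_eq, Set.image_singleton]
    congr <;> ext k <;> fin_cases k <;> simp
  rw [span_fU12_pderiv_eq, hz, Ideal.span_singleton_mul_left_unit (isUnit_ofNat 4), hM,
    colon_span_monomial_image, hshift, hN]
end

section
/- For every t ∈ ℂ, let f = x³ + y⁷ + t·x·y⁶ ∈ ℂ[x, y] and let R be the localization of ℂ[x, y] at the maximal ideal (x, y). Then the image of f in R belongs to the ideal of R generated by the images of ∂f/∂x = 3x² + ty⁶ and ∂f/∂y = 7y⁶ + 6txy⁵. -/
open MvPolynomial

section Localization

variable {R S : Type*} [CommSemiring R] [CommSemiring S] [Algebra R S]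

theorem IsLocalization.algebraMap_mem_span_pair_of_mul_mem (M : Submonoid R)
    [IsLocalization M S] {u f g h : R} (hu : u ∈ M) (huf : u * f ∈ Ideal.span {g, h}) :
    algebraMap R S f ∈ Ideal.span {algebraMap R S g, algebraMap R S h} := by
  have himage : algebraMap R S (u * f) ∈ Ideal.span {algebraMap R S g, algebraMap R S h} := by
    simpa only [Ideal.map_span, Set.image_pair] using
      Ideal.mem_map_of_mem (algebraMap R S) huf
  rwa [map_mul, Ideal.unit_mul_mem_iff_mem _ (IsLocalization.map_units S ⟨u, hu⟩)] at himage

end Localization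

theorem MvPolynomial.constantCoeff_eq_zero_of_mem_span_X_pair {σ R : Type*} [CommSemiring R]
    {p : MvPolynomial σ R} (i j : σ) (hp : p ∈ Ideal.span {X i, X j}) : constantCoeff p = 0 := by
  have hle : (Ideal.span {X i, X j} : Ideal (MvPolynomial σ R)) ≤ RingHom.ker constantCoeff := by
    rw [Ideal.span_le]
    rintro q (rfl | rfl) <;> simp
  exact hle hp

section Jacobian

variable {R : Type*} [CommRing R]

theorem pderiv_zero_x_cube_add_y_pow_seven (t : R) :
    pderiv 0 (X 0 ^ 3 + X 1 ^ 7 + C t * X 0 * X 1 ^ 6 : MvPolynomial (Fin 2) R) =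
      3 * X 0 ^ 2 + C t * X 1 ^ 6 := by
  simp only [map_add, Derivation.leibniz_pow, Derivation.leibniz, pderiv_X, derivation_C,
    Pi.single_apply, smul_eq_mul, nsmul_eq_mul]
  norm_num
  ring

theorem pderiv_one_x_cube_add_y_pow_seven (t : R) :
    pderiv 1 (X 0 ^ 3 + X 1 ^ 7 + C t * X 0 * X 1 ^ 6 : MvPolynomial (Fin 2) R) =
      7 * X 1 ^ 6 + 6 * C t * X 0 * X 1 ^ 5 := by
  simp only [map_add, Derivation.leibniz_pow, Derivation.leibniz, pderiv_X, derivation_C,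
    Pi.single_apply, smul_eq_mul, nsmul_eq_mul]
  norm_num
  ring

/-- The relation `d₁ f_x + d₂ f_y = u f` of the paper, scaled by `7` to clear denominators;
`u = 21 (49 + 12 t³ y⁴)` is a unit at the origin. -/
theorem mul_x_cube_add_y_pow_seven_mem_span_pderiv (t : R) :
    (21 * (49 + 12 * C t ^ 3 * X 1 ^ 4)) * (X 0 ^ 3 + X 1 ^ 7 + C t * X 0 * X 1 ^ 6) ∈
      Ideal.span {pderiv 0 (X 0 ^ 3 + X 1 ^ 7 + C t * X 0 * X 1 ^ 6 : MvPolynomial (Fin 2) R),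
        pderiv 1 (X 0 ^ 3 + X 1 ^ 7 + C t * X 0 * X 1 ^ 6 : MvPolynomial (Fin 2) R)} := by
  rw [pderiv_zero_x_cube_add_y_pow_seven, pderiv_one_x_cube_add_y_pow_seven, Ideal.mem_span_pair]
  exact ⟨7 * X 0 * (49 + 12 * C t ^ 3 * X 1 ^ 4) + 56 * C t ^ 2 * X 1 ^ 5,
    3 * X 1 * (49 + 12 * C t ^ 3 * X 1 ^ 4) - 28 * C t * X 0 - 8 * C t ^ 3 * X 1 ^ 5, by ring⟩

end Jacobian

/-- For every `t ∈ ℂ`, with `f = x³ + y⁷ + t·x·y⁶ ∈ ℂ[x, y]` and `R` the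
localization of `ℂ[x, y]` at the maximal ideal `(x, y)`, the image of `f` in `R` belongs to
the ideal of `R` generated by the images of `∂f/∂x` and `∂f/∂y`. -/
theorem stmt_12 (t : ℂ) (f : MvPolynomial (Fin 2) ℂ)
    (hf : f = X 0 ^ 3 + X 1 ^ 7 + C t * X 0 * X 1 ^ 6)
    (hprime : (Ideal.span {X 0, X 1} : Ideal (MvPolynomial (Fin 2) ℂ)).IsPrime) :
    algebraMap (MvPolynomial (Fin 2) ℂ)
        (Localization ((Ideal.span {X 0, X 1} : Ideal (MvPolynomial (Fin 2) ℂ)).primeCompl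
          (hp := hprime))) f ∈
      Ideal.span
        {algebraMap (MvPolynomial (Fin 2) ℂ)
            (Localization ((Ideal.span {X 0, X 1} : Ideal (MvPolynomial (Fin 2) ℂ)).primeCompl
              (hp := hprime))) (pderiv 0 f),
          algebraMap (MvPolynomial (Fin 2) ℂ)
            (Localization ((Ideal.span {X 0, X 1} : Ideal (MvPolynomial (Fin 2) ℂ)).primeCompl
              (hp := hprime))) (pderiv 1 f)} := by
  subst hf
  refine IsLocalization.algebraMap_mem_span_pair_of_mul_mem
    (Ideal.span {X 0, X 1}).primeCompl ?_
    (mul_x_cube_add_y_pow_seven_mem_span_pderiv t)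
  intro hmem
  have hcoeff := constantCoeff_eq_zero_of_mem_span_X_pair 0 1 hmem
  norm_num [map_ofNat] at hcoeff
end
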